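/- arXiv:2103.08818 — 7 statements merged into one kernel-verified Lean document; each statement's English description precedes it below -/
import Mathlib

section
/- A 2×2 density matrix ρ on ℂ^2 is assisted maximally coherent (AMC) if and only if both diagonal entries of ρ equal 1/2. -/
open Matrix
open scoped ComplexOrder

/-- A unit vector `ψ ∈ ℂ^n` is *maximally coherent* (w.r.t. the standard basis)
if `|ψ i| = 1/√n` for every index `i`. -/
def MaxCoherent {n : ℕ} (ψ : Fin n → ℂ) : Prop :=
  ∀ i, ‖ψ i‖ = 1 / Real.sqrt n

/-- A density matrix `ρ` on `ℂ^n` is *assisted maximally coherent* (AMC) if it is a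
finite convex combination of projections `ψ ψ†` onto maximally coherent unit vectors. -/
def IsAMC {n : ℕ} (ρ : Matrix (Fin n) (Fin n) ℂ) : Prop :=
  ∃ (m : ℕ) (p : Fin m → ℝ) (ψ : Fin m → Fin n → ℂ),
    (∀ k, 0 ≤ p k) ∧ (∑ k, p k = 1) ∧ (∀ k, MaxCoherent (ψ k)) ∧
    ρ = ∑ k, (p k : ℂ) • Matrix.vecMulVec (ψ k) (star (ψ k))

/-!
Each maximally coherent `ψ` has `ψ i * conj (ψ i) = 1/n`, so every AMC state has flat diagonal.
Conversely, a qubit state with diagonal `(1/2, 1/2)` is `½ [[1, z̄], [z, 1]]`, positivity (its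
determinant `(1 - |z|²)/4`) forces `|z| ≤ 1`, and such a matrix is affine in `z`. Writing `z` as
a convex combination of `u` and `-u` with `|u| = 1` exhibits the state as a mixture of the
projections onto the maximally coherent vectors `(1, ±u)/√2`.
-/

theorem MaxCoherent.mul_star_self {n : ℕ} {ψ : Fin n → ℂ} (hψ : MaxCoherent ψ) (i : Fin n) :
    ψ i * star (ψ i) = (n : ℂ)⁻¹ := by
  rw [Complex.star_def, Complex.mul_conj, Complex.normSq_eq_norm_sq, hψ i, div_pow,
    Real.sq_sqrt n.cast_nonneg]
  push_cast
  ring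

theorem IsAMC.diag_eq {n : ℕ} {ρ : Matrix (Fin n) (Fin n) ℂ} (h : IsAMC ρ) (i : Fin n) :
    ρ i i = (n : ℂ)⁻¹ := by
  obtain ⟨m, p, ψ, -, hp, hψ, rfl⟩ := h
  simp only [Matrix.sum_apply, Matrix.smul_apply, vecMulVec_apply, Pi.star_apply, smul_eq_mul,
    (hψ _).mul_star_self, ← Finset.sum_mul, ← Complex.ofReal_sum, hp, Complex.ofReal_one, one_mul]

theorem isAMC_convex_pair {n : ℕ} {ψ φ : Fin n → ℂ} (hψ : MaxCoherent ψ) (hφ : MaxCoherent φ)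
    {a b : ℝ} (ha : 0 ≤ a) (hb : 0 ≤ b) (hab : a + b = 1) :
    IsAMC ((a : ℂ) • vecMulVec ψ (star ψ) + (b : ℂ) • vecMulVec φ (star φ)) :=
  ⟨2, ![a, b], ![ψ, φ], Fin.forall_fin_two.2 ⟨ha, hb⟩, by simpa using hab,
    Fin.forall_fin_two.2 ⟨hψ, hφ⟩, by simp⟩

noncomputable def balancedQubit (z : ℂ) : Matrix (Fin 2) (Fin 2) ℂ :=
  !![1 / 2, star z / 2; z / 2, 1 / 2]

theorem Matrix.IsHermitian.eq_balancedQubit {ρ : Matrix (Fin 2) (Fin 2) ℂ} (hρ : ρ.IsHermitian)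
    (hdiag : ∀ i, ρ i i = 1 / 2) : ρ = balancedQubit (2 * ρ 1 0) := by
  have h01 : ρ 0 1 = star (ρ 1 0) := (hρ.apply 0 1).symm
  ext i j
  fin_cases i <;> fin_cases j <;> simp [balancedQubit, hdiag, h01]

theorem balancedQubit_convex_comb {a b : ℝ} (hab : a + b = 1) (z w : ℂ) :
    (a : ℂ) • balancedQubit z + (b : ℂ) • balancedQubit w = balancedQubit (a • z + b • w) := by
  have hab' : (a : ℂ) + b = 1 := by exact_mod_cast hab
  ext i j
  fin_cases i <;> fin_cases j <;>
    simp only [balancedQubit, smul_of, smul_cons, smul_eq_mul, smul_empty, Matrix.add_apply,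
      of_apply, cons_val', cons_val_zero, cons_val_one, cons_val_fin_one, Complex.real_smul,
      star_add, star_mul', RCLike.star_def, Complex.conj_ofReal, Fin.isValue, Fin.zero_eta,
      Fin.mk_one]
  · linear_combination hab' / 2
  · ring
  · ring
  · linear_combination hab' / 2

noncomputable def phaseState (w : ℂ) : Fin 2 → ℂ :=
  ![1 / Real.sqrt 2, w / Real.sqrt 2]

theorem maxCoherent_phaseState {w : ℂ} (hw : ‖w‖ = 1) : MaxCoherent (phaseState w) := by
  intro i
  fin_cases i <;> simp [phaseState, hw]

theorem vecMulVec_phaseState {w : ℂ} (hw : ‖w‖ = 1) :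
    vecMulVec (phaseState w) (star (phaseState w)) = balancedQubit w := by
  have hs : ((Real.sqrt 2 : ℂ))⁻¹ * (Real.sqrt 2 : ℂ)⁻¹ = 1 / 2 := by
    rw [← mul_inv, ← Complex.ofReal_mul, Real.mul_self_sqrt zero_le_two]; norm_num
  have hww : w * starRingEnd ℂ w = 1 := by
    rw [Complex.mul_conj, Complex.normSq_eq_norm_sq, hw]; norm_num
  ext i j
  fin_cases i <;> fin_cases j <;>
    simp only [phaseState, balancedQubit, vecMulVec_apply, div_eq_mul_inv, one_mul, Pi.star_apply,
      of_apply, cons_val', cons_val_zero, cons_val_one, cons_val_fin_one, star_mul', star_inv₀,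
      RCLike.star_def, Complex.conj_ofReal, Fin.isValue, Fin.zero_eta, Fin.mk_one]
  · linear_combination hs
  · linear_combination starRingEnd ℂ w * hs
  · linear_combination w * hs
  · linear_combination hs + (Real.sqrt 2 : ℂ)⁻¹ * (Real.sqrt 2 : ℂ)⁻¹ * hww

theorem Matrix.PosSemidef.norm_apply_one_zero_le_half {ρ : Matrix (Fin 2) (Fin 2) ℂ}
    (hρ : ρ.PosSemidef) (hdiag : ∀ i, ρ i i = 1 / 2) : ‖ρ 1 0‖ ≤ 1 / 2 := by
  have hdet : ρ.det = ((1 / 4 - ‖ρ 1 0‖ ^ 2 : ℝ) : ℂ) := by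
    rw [det_fin_two, hdiag, hdiag, ← hρ.1.apply 0 1, Complex.star_def, mul_comm (starRingEnd ℂ _),
      Complex.mul_conj, Complex.normSq_eq_norm_sq]
    push_cast; ring
  have := Complex.zero_le_real.mp (hdet ▸ hρ.det_nonneg)
  nlinarith [norm_nonneg (ρ 1 0)]

theorem Complex.exists_norm_eq_one_mem_segment_neg {z : ℂ} (hz : ‖z‖ ≤ 1) :
    ∃ u : ℂ, ‖u‖ = 1 ∧ z ∈ segment ℝ (-u) u := by
  refine ⟨exp (arg z * I), norm_exp_ofReal_mul_I _, (1 - ‖z‖) / 2, (1 + ‖z‖) / 2,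
    by linarith [norm_nonneg z], by linarith [norm_nonneg z], by ring, ?_⟩
  conv_rhs => rw [← norm_mul_exp_arg_mul_I z]
  simp only [real_smul, smul_neg]
  push_cast; ring

theorem amc_iff_diagonal_dim_two_general (ρ : Matrix (Fin 2) (Fin 2) ℂ)
    (hpsd : ρ.PosSemidef) :
    IsAMC ρ ↔ ∀ i, ρ i i = (1 : ℂ) / 2 := by
  refine ⟨fun h i => by simpa using h.diag_eq i, fun hdiag => ?_⟩
  have hz : ‖2 * ρ 1 0‖ ≤ 1 := by
    rw [norm_mul, Complex.norm_two]; linarith [hpsd.norm_apply_one_zero_le_half hdiag]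
  obtain ⟨u, hu, a, b, ha, hb, hab, hcomb⟩ := Complex.exists_norm_eq_one_mem_segment_neg hz
  have hnu : ‖-u‖ = 1 := by rwa [norm_neg]
  rw [hpsd.1.eq_balancedQubit hdiag, ← hcomb, ← balancedQubit_convex_comb hab,
    ← vecMulVec_phaseState hu, ← vecMulVec_phaseState hnu]
  exact isAMC_convex_pair (maxCoherent_phaseState hnu) (maxCoherent_phaseState hu) ha hb hab

theorem amc_iff_diagonal_dim_two (ρ : Matrix (Fin 2) (Fin 2) ℂ)
    (hpsd : ρ.PosSemidef) (htr : ρ.trace = 1) :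
    IsAMC ρ ↔ ∀ i, ρ i i = (1 : ℂ) / 2 :=
  amc_iff_diagonal_dim_two_general ρ hpsd
end

section
/- For any n×n density matrix ρ = (ρ_ij) on ℂ^n, the associated Schmidt correlated state ρ_mc = Σ_{i,j} ρ_ij |ii⟩⟨jj| on ℂ^n ⊗ ℂ^n is assisted maximally entangled (AME) if and only if ρ is assisted maximally coherent (AMC). -/
open Matrix
open scoped ComplexOrder

/-- The coefficient matrix of a vector `Ψ ∈ ℂ^n ⊗ ℂ^n` (identified with `ℂ^{n×n}`
via the standard product basis): `A i j = Ψ (i,j)`. -/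
def coeffMatrix {n : ℕ} (Ψ : Fin n × Fin n → ℂ) : Matrix (Fin n) (Fin n) ℂ :=
  Matrix.of fun i j => Ψ (i, j)

/-- A unit vector `Ψ ∈ ℂ^n ⊗ ℂ^n` is *maximally entangled* if its coefficient matrix `A`
satisfies `A Aᴴ = (1/n) I`. -/
def MaxEntangled {n : ℕ} (Ψ : Fin n × Fin n → ℂ) : Prop :=
  coeffMatrix Ψ * (coeffMatrix Ψ)ᴴ = (n : ℂ)⁻¹ • 1

/-- A density matrix on `ℂ^n ⊗ ℂ^n` is *assisted maximally entangled* (AME) if it is a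
finite convex combination of projections onto maximally entangled unit vectors. -/
def IsAME {n : ℕ} (ρ : Matrix (Fin n × Fin n) (Fin n × Fin n) ℂ) : Prop :=
  ∃ (m : ℕ) (p : Fin m → ℝ) (Ψ : Fin m → Fin n × Fin n → ℂ),
    (∀ k, 0 ≤ p k) ∧ (∑ k, p k = 1) ∧ (∀ k, MaxEntangled (Ψ k)) ∧
    ρ = ∑ k, (p k : ℂ) • Matrix.vecMulVec (Ψ k) (star (Ψ k))

/-- The Schmidt correlated state `ρ_mc = Σ_{i,j} ρ_ij |ii⟩⟨jj|` on `ℂ^n ⊗ ℂ^n`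
associated to a matrix `ρ = (ρ_ij)` on `ℂ^n`. -/
def schmidtCorrelated {n : ℕ} (ρ : Matrix (Fin n) (Fin n) ℂ) :
    Matrix (Fin n × Fin n) (Fin n × Fin n) ℂ :=
  Matrix.of fun a b => if a.1 = a.2 ∧ b.1 = b.2 then ρ a.1 b.1 else 0

/-!
A vector `ψ ∈ ℂⁿ` corresponds to `Σᵢ ψᵢ |ii⟩ ∈ ℂⁿ ⊗ ℂⁿ`, whose coefficient matrix is
`diagonal ψ`; this vector is maximally entangled exactly when `ψ` is maximally coherent, and
`ρ ↦ ρ_mc` is an injective linear map sending `ψ ψ†` to the projection onto `Σᵢ ψᵢ |ii⟩`.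
That carries AMC decompositions of `ρ` to AME decompositions of `ρ_mc`. Conversely, `ρ_mc`
vanishes on the diagonal entries `|ij⟩⟨ij|` with `i ≠ j`, and a positive combination of
projections `Ψ_k Ψ_k†` can only do so if every `Ψ_k` of positive weight vanishes at `|ij⟩`;
so these `Ψ_k` are of the form `Σᵢ ψᵢ |ii⟩`.
-/

lemma Matrix.apply_eq_zero_of_sum_smul_vecMulVec_apply_self_eq_zero {𝕜 ι m : Type*} [RCLike 𝕜]
    [Fintype ι] {p : ι → ℝ} (hp : ∀ k, 0 ≤ p k) (v : ι → m → 𝕜) {a : m}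
    (h : (∑ k, (p k : 𝕜) • vecMulVec (v k) (star (v k))) a a = 0) {k : ι} (hk : p k ≠ 0) :
    v k a = 0 := by
  have hsum : ∑ l, p l * ‖v l a‖ ^ 2 = 0 := by
    simp only [Matrix.sum_apply, smul_apply, vecMulVec_apply, Pi.star_apply, RCLike.star_def,
      RCLike.mul_conj, smul_eq_mul] at h
    exact_mod_cast h
  have hterm := (Finset.sum_eq_zero_iff_of_nonneg fun l _ =>
    mul_nonneg (hp l) (sq_nonneg ‖v l a‖)).1 hsum k (Finset.mem_univ k)
  simpa [hk] using hterm

section SchmidtCorrelated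

variable {n : ℕ}

def diagVec (ψ : Fin n → ℂ) : Fin n × Fin n → ℂ := fun a => if a.1 = a.2 then ψ a.1 else 0

lemma coeffMatrix_diagVec (ψ : Fin n → ℂ) : coeffMatrix (diagVec ψ) = diagonal ψ := by
  ext i j
  by_cases hij : i = j <;> simp [coeffMatrix, diagVec, diagonal, hij]

lemma maxCoherent_iff_normSq_eq (ψ : Fin n → ℂ) :
    MaxCoherent ψ ↔ ∀ i, Complex.normSq (ψ i) = (n : ℝ)⁻¹ := by
  refine forall_congr' fun i => ?_
  rw [Complex.normSq_eq_norm_sq, one_div, ← Real.sqrt_inv]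
  constructor
  · intro h
    rw [h, Real.sq_sqrt (by positivity)]
  · intro h
    rw [← h, Real.sqrt_sq (norm_nonneg _)]

lemma maxEntangled_diagVec_iff (ψ : Fin n → ℂ) : MaxEntangled (diagVec ψ) ↔ MaxCoherent ψ := by
  rw [MaxEntangled, coeffMatrix_diagVec, diagonal_conjTranspose, diagonal_mul_diagonal,
    smul_one_eq_diagonal, diagonal_eq_diagonal_iff, maxCoherent_iff_normSq_eq]
  simp only [Pi.star_apply, Complex.star_def, Complex.mul_conj]
  refine forall_congr' fun i => ?_
  rw [← Complex.ofReal_natCast, ← Complex.ofReal_inv, Complex.ofReal_inj]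

lemma maxCoherent_const : MaxCoherent (fun _ : Fin n => ((Real.sqrt n)⁻¹ : ℂ)) := by
  intro i
  rw [← Complex.ofReal_inv, Complex.norm_real, Real.norm_of_nonneg (by positivity), one_div]

lemma eq_diagVec_of_offDiag_eq_zero {Ψ : Fin n × Fin n → ℂ}
    (h : ∀ a : Fin n × Fin n, a.1 ≠ a.2 → Ψ a = 0) : Ψ = diagVec fun i => Ψ (i, i) := by
  funext ⟨i, j⟩
  by_cases hij : i = j
  · subst hij
    simp [diagVec]
  · simp [diagVec, hij, h (i, j) hij]

lemma schmidtCorrelated_injective : Function.Injective (schmidtCorrelated (n := n)) := by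
  intro A B h
  ext i j
  simpa [schmidtCorrelated] using congrFun (congrFun h (i, i)) (j, j)

lemma schmidtCorrelated_apply_self_of_ne (ρ : Matrix (Fin n) (Fin n) ℂ) {a : Fin n × Fin n}
    (ha : a.1 ≠ a.2) : schmidtCorrelated ρ a a = 0 := by
  simp [schmidtCorrelated, ha]

lemma schmidtCorrelated_sum {ι : Type*} (s : Finset ι) (A : ι → Matrix (Fin n) (Fin n) ℂ) :
    schmidtCorrelated (∑ k ∈ s, A k) = ∑ k ∈ s, schmidtCorrelated (A k) := by
  ext a b
  by_cases h : a.1 = a.2 ∧ b.1 = b.2 <;> simp [schmidtCorrelated, Matrix.sum_apply, h]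

lemma schmidtCorrelated_smul (c : ℂ) (A : Matrix (Fin n) (Fin n) ℂ) :
    schmidtCorrelated (c • A) = c • schmidtCorrelated A := by
  ext a b
  by_cases h : a.1 = a.2 ∧ b.1 = b.2 <;> simp [schmidtCorrelated, h]

lemma schmidtCorrelated_vecMulVec (ψ : Fin n → ℂ) :
    schmidtCorrelated (vecMulVec ψ (star ψ)) = vecMulVec (diagVec ψ) (star (diagVec ψ)) := by
  ext a b
  by_cases ha : a.1 = a.2 <;> by_cases hb : b.1 = b.2 <;>
    simp [schmidtCorrelated, diagVec, vecMulVec_apply, ha, hb]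

end SchmidtCorrelated

theorem schmidtCorrelated_ame_iff_amc_general {n : ℕ} (ρ : Matrix (Fin n) (Fin n) ℂ) :
    IsAME (schmidtCorrelated ρ) ↔ IsAMC ρ := by
  constructor
  · rintro ⟨m, p, Ψ, hp, hsum, hΨ, hρ⟩
    have hdiag : ∀ k, p k ≠ 0 → Ψ k = diagVec fun i => Ψ k (i, i) := fun k hk =>
      eq_diagVec_of_offDiag_eq_zero fun a ha =>
        apply_eq_zero_of_sum_smul_vecMulVec_apply_self_eq_zero hp Ψ
          (hρ ▸ schmidtCorrelated_apply_self_of_ne ρ ha) hk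
    -- a term of weight zero may carry any vector; replace it by a maximally coherent one
    let ψ k : Fin n → ℂ :=
      if p k = 0 then fun _ => ((Real.sqrt n)⁻¹ : ℂ) else fun i => Ψ k (i, i)
    have hΨψ : ∀ k, p k ≠ 0 → Ψ k = diagVec (ψ k) := fun k hk => by
      simpa [ψ, hk] using hdiag k hk
    refine ⟨m, p, ψ, hp, hsum, fun k => ?_, schmidtCorrelated_injective ?_⟩
    · by_cases hk : p k = 0
      · simpa [ψ, hk] using maxCoherent_const
      · rw [← maxEntangled_diagVec_iff, ← hΨψ k hk]
        exact hΨ k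
    · rw [hρ, schmidtCorrelated_sum]
      refine Finset.sum_congr rfl fun k _ => ?_
      rw [schmidtCorrelated_smul, schmidtCorrelated_vecMulVec]
      by_cases hk : p k = 0
      · simp [hk]
      · rw [hΨψ k hk]
  · rintro ⟨m, p, ψ, hp, hsum, hψ, rfl⟩
    refine ⟨m, p, fun k => diagVec (ψ k), hp, hsum,
      fun k => (maxEntangled_diagVec_iff _).2 (hψ k), ?_⟩
    simp only [schmidtCorrelated_sum, schmidtCorrelated_smul, schmidtCorrelated_vecMulVec]

theorem schmidtCorrelated_ame_iff_amc {n : ℕ} (ρ : Matrix (Fin n) (Fin n) ℂ)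
    (hpsd : ρ.PosSemidef) (htr : ρ.trace = 1) :
    IsAME (schmidtCorrelated ρ) ↔ IsAMC ρ :=
  schmidtCorrelated_ame_iff_amc_general ρ
end

section
/- If the Schmidt correlated state ρ_mc = Σ_{i,j} ρ_ij |ii⟩⟨jj| on ℂ^n ⊗ ℂ^n associated to a density matrix ρ = (ρ_ij) is assisted maximally entangled (AME), then ρ_ii = 1/n for every index i. -/
/-!
Tracing out the second factor of `|Ψ⟩⟨Ψ|` gives `A Aᴴ`, where `A` is the coefficient matrix
of `Ψ`, so every AME state has reduced state `(1/n) I`. The reduced state of `ρ_mc` is the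
diagonal part of `ρ`, and comparing the two gives `ρ_ii = 1/n`.
-/

open Matrix
open scoped ComplexOrder

namespace Matrix

variable {ι κ R : Type*} [Fintype κ] [CommSemiring R]

def partialTraceRight : Matrix (ι × κ) (ι × κ) R →ₗ[R] Matrix ι ι R where
  toFun M := of fun i i' => ∑ j, M (i, j) (i', j)
  map_add' M N := by ext; simp [Finset.sum_add_distrib]
  map_smul' c M := by ext; simp [Finset.mul_sum]

@[simp]
theorem partialTraceRight_apply (M : Matrix (ι × κ) (ι × κ) R) (i i' : ι) :
    partialTraceRight M i i' = ∑ j, M (i, j) (i', j) :=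
  rfl

end Matrix

theorem partialTraceRight_vecMulVec_star {n : ℕ} (Ψ : Fin n × Fin n → ℂ) :
    partialTraceRight (vecMulVec Ψ (star Ψ)) = coeffMatrix Ψ * (coeffMatrix Ψ)ᴴ := by
  ext i i'
  simp [vecMulVec_apply, mul_apply, coeffMatrix]

theorem IsAME.partialTraceRight_eq {n : ℕ} {σ : Matrix (Fin n × Fin n) (Fin n × Fin n) ℂ}
    (hσ : IsAME σ) : partialTraceRight σ = (n : ℂ)⁻¹ • 1 := by
  obtain ⟨m, p, Ψ, -, hsum, hme, rfl⟩ := hσ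
  simp only [MaxEntangled] at hme
  have hsumℂ : ∑ k, (p k : ℂ) = 1 := by exact_mod_cast hsum
  calc partialTraceRight (∑ k, (p k : ℂ) • vecMulVec (Ψ k) (star (Ψ k)))
      = ∑ k, (p k : ℂ) • ((n : ℂ)⁻¹ • (1 : Matrix (Fin n) (Fin n) ℂ)) := by
        simp only [map_sum, map_smul, partialTraceRight_vecMulVec_star, hme]
    _ = (n : ℂ)⁻¹ • 1 := by rw [← Finset.sum_smul, hsumℂ, one_smul]

theorem partialTraceRight_schmidtCorrelated {n : ℕ} (ρ : Matrix (Fin n) (Fin n) ℂ) :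
    partialTraceRight (schmidtCorrelated ρ) = diagonal fun i => ρ i i := by
  ext i i'
  rcases eq_or_ne i i' with rfl | hii' <;>
    simp [schmidtCorrelated, ite_and, eq_comm, *]

theorem schmidtCorrelated_ame_diagonal_general {n : ℕ} (ρ : Matrix (Fin n) (Fin n) ℂ)
    (hame : IsAME (schmidtCorrelated ρ)) :
    ∀ i, ρ i i = (1 : ℂ) / n := by
  intro i
  have hreduced := congrFun₂ hame.partialTraceRight_eq i i
  rw [partialTraceRight_schmidtCorrelated] at hreduced
  simpa using hreduced

theorem schmidtCorrelated_ame_diagonal {n : ℕ} (ρ : Matrix (Fin n) (Fin n) ℂ)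
    (hpsd : ρ.PosSemidef) (htr : ρ.trace = 1)
    (hame : IsAME (schmidtCorrelated ρ)) :
    ∀ i, ρ i i = (1 : ℂ) / n :=
  schmidtCorrelated_ame_diagonal_general ρ hame
end

section
/- For every f ∈ 𝔉 that is not identically zero on Ω_n and every full rank density matrix ρ on ℂ^n, the coherence of assistance is strictly larger than the coherence of convex roof: C_c(ρ) < C_a(ρ). -/
open Matrix
open scoped ComplexOrder

/-- The set of values `Σ_k p_k F(ψ_k)` over all pure state decompositions
`ρ = Σ_k p_k ψ_k ψ_k†` of `ρ` (weights `p_k ≥ 0` summing to `1`, unit vectors `ψ_k`).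
Its supremum is the least concave majorant (assistance) extension of `F`, and
its infimum is the convex roof extension of `F`. -/
def pureDecompVals {ι : Type*} [Fintype ι] (F : (ι → ℂ) → ℝ)
    (ρ : Matrix ι ι ℂ) : Set ℝ :=
  { x | ∃ (m : ℕ) (p : Fin m → ℝ) (ψ : Fin m → ι → ℂ),
      (∀ k, 0 ≤ p k) ∧ (∑ k, p k = 1) ∧
      (∀ k, ∑ i, ‖ψ k i‖ ^ 2 = 1) ∧
      ρ = ∑ k, (p k : ℂ) • Matrix.vecMulVec (ψ k) (star (ψ k)) ∧
      x = ∑ k, p k * F (ψ k) }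

/-!
Since `ρ` has full rank, `ρ - c • 1` is positive semidefinite for some `c > 0`, so a pure state
decomposition of `ρ - c • 1` extends to one of `ρ` by appending any decomposition of `c • 1`.
Along the standard basis, `c • 1` contributes `0`, because `f` vanishes at the vertices of the
simplex. Written as `c • ψ ψ† + c • (1 - ψ ψ†)` with `|ψ i|² = y i` and `f y ≠ 0`, it contributes
at least `c * f y > 0`, because concavity makes `f` nonnegative on the simplex. The values of all
decompositions lie between `0` and `f (diag ρ)` (Jensen), so infimum and supremum are finite and
differ by at least `c * f y`.
-/

open Finset

section PureDecompositions

variable {ι : Type*} [Fintype ι]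

lemma star_dotProduct_self_eq_sum_norm_sq {𝕜 : Type*} [RCLike 𝕜] (ψ : ι → 𝕜) :
    star ψ ⬝ᵥ ψ = ((∑ i, ‖ψ i‖ ^ 2 : ℝ) : 𝕜) := by
  simp [dotProduct, RCLike.conj_mul]

lemma Matrix.IsHermitian.eq_sum_eigenvalues_smul_vecMulVec {𝕜 : Type*} [RCLike 𝕜]
    [DecidableEq ι] {A : Matrix ι ι 𝕜} (hA : A.IsHermitian) :
    A = ∑ j, hA.eigenvalues j •
      vecMulVec (hA.eigenvectorBasis j) (star (hA.eigenvectorBasis j)) := by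
  conv_lhs => rw [hA.spectral_theorem, Unitary.conjStarAlgAut_apply]
  ext a b
  simp only [mul_apply, diagonal_apply, mul_ite, mul_zero, sum_ite_eq', mem_univ, if_true,
    Matrix.sum_apply, Matrix.smul_apply, vecMulVec_apply]
  refine sum_congr rfl fun j _ => ?_
  simp only [eigenvectorUnitary_apply, Function.comp_apply, star_apply, RCLike.star_def,
    Pi.star_apply, RCLike.real_smul_eq_coe_mul]
  ring

open scoped MatrixOrder in
lemma Matrix.PosDef.exists_pos_posSemidef_sub_smul_one {𝕜 : Type*} [RCLike 𝕜] [DecidableEq ι]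
    [Nonempty ι] {A : Matrix ι ι 𝕜} (hA : A.PosDef) :
    ∃ c : ℝ, 0 < c ∧ (A - c • 1).PosSemidef := by
  obtain ⟨c, hc, hle⟩ := (CFC.exists_pos_algebraMap_le_iff hA.isHermitian.isSelfAdjoint).2
    fun x hx ↦ hA.isStrictlyPositive.spectrum_pos hx
  exact ⟨c, hc, by simpa [Algebra.algebraMap_eq_smul_one, Matrix.le_iff] using hle⟩

lemma Matrix.posSemidef_one_sub_vecMulVec {𝕜 : Type*} [RCLike 𝕜] [DecidableEq ι] {ψ : ι → 𝕜}
    (hψ : star ψ ⬝ᵥ ψ = 1) : (1 - vecMulVec ψ (star ψ)).PosSemidef := by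
  set P := vecMulVec ψ (star ψ)
  have hP : Pᴴ = P := by simp [P, conjTranspose_vecMulVec]
  have hPP : P * P = P := by simp [P, vecMulVec_mul_vecMulVec, hψ]
  have : (1 - P)ᴴ * (1 - P) = 1 - P := by
    rw [conjTranspose_sub, conjTranspose_one, hP, sub_mul, mul_sub, mul_sub, hPP]
    simp
  exact this ▸ posSemidef_conjTranspose_mul_self (1 - P)

/-- Dropping the normalization `∑ k, p k = 1` of `pureDecompVals` makes these sets additive
in `A`. -/
def weightedPureDecompVals (F : (ι → ℂ) → ℝ) (A : Matrix ι ι ℂ) : Set ℝ :=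
  { x | ∃ (m : ℕ) (p : Fin m → ℝ) (ψ : Fin m → ι → ℂ),
      (∀ k, 0 ≤ p k) ∧ (∀ k, ∑ i, ‖ψ k i‖ ^ 2 = 1) ∧
      A = ∑ k, (p k : ℂ) • vecMulVec (ψ k) (star (ψ k)) ∧
      x = ∑ k, p k * F (ψ k) }

variable (F : (ι → ℂ) → ℝ)

lemma sum_mem_weightedPureDecompVals {κ : Type*} [Fintype κ] {p : κ → ℝ} {ψ : κ → ι → ℂ}
    (hp : ∀ k, 0 ≤ p k) (hψ : ∀ k, ∑ i, ‖ψ k i‖ ^ 2 = 1) :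
    ∑ k, p k * F (ψ k) ∈
      weightedPureDecompVals F (∑ k, (p k : ℂ) • vecMulVec (ψ k) (star (ψ k))) :=
  let e := Fintype.equivFin κ
  ⟨_, p ∘ e.symm, ψ ∘ e.symm, fun _ => hp _, fun _ => hψ _,
    (e.symm.sum_comp _).symm, (e.symm.sum_comp _).symm⟩

lemma add_mem_weightedPureDecompVals {A B : Matrix ι ι ℂ} {x y : ℝ}
    (hx : x ∈ weightedPureDecompVals F A) (hy : y ∈ weightedPureDecompVals F B) :
    x + y ∈ weightedPureDecompVals F (A + B) := by
  obtain ⟨m, p, ψ, hp, hψ, rfl, rfl⟩ := hx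
  obtain ⟨m', q, φ, hq, hφ, rfl, rfl⟩ := hy
  simpa only [Fintype.sum_sum_type, Sum.elim_inl, Sum.elim_inr] using
    sum_mem_weightedPureDecompVals F (p := Sum.elim p q) (ψ := Sum.elim ψ φ)
      (Sum.rec hp hq) (Sum.rec hψ hφ)

lemma mul_mem_weightedPureDecompVals {ψ : ι → ℂ} (hψ : ∑ i, ‖ψ i‖ ^ 2 = 1) {c : ℝ}
    (hc : 0 ≤ c) : c * F ψ ∈ weightedPureDecompVals F ((c : ℂ) • vecMulVec ψ (star ψ)) := by
  simpa using sum_mem_weightedPureDecompVals F (p := fun _ : Unit => c) (ψ := fun _ => ψ)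
    (fun _ => hc) (fun _ => hψ)

lemma zero_mem_weightedPureDecompVals_smul_one [DecidableEq ι]
    (hF : ∀ i, F (Pi.single i 1) = 0) {c : ℝ} (hc : 0 ≤ c) :
    0 ∈ weightedPureDecompVals F ((c : ℂ) • 1) := by
  have := sum_mem_weightedPureDecompVals F (p := fun _ : ι => c) (ψ := fun i => Pi.single i 1)
    (fun _ => hc) (fun i => by simp [Pi.single_apply, apply_ite])
  simpa only [hF, mul_zero, sum_const_zero, ← smul_sum, Pi.star_single, star_one,
    ← single_eq_single_vecMulVec_single, sum_single_one] using this

lemma Matrix.PosSemidef.weightedPureDecompVals_nonempty {A : Matrix ι ι ℂ} (hA : A.PosSemidef) :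
    (weightedPureDecompVals F A).Nonempty := by
  classical
  have hunit (j : ι) : ∑ i, ‖hA.isHermitian.eigenvectorBasis j i‖ ^ 2 = 1 := by
    rw [← EuclideanSpace.norm_sq_eq, hA.isHermitian.eigenvectorBasis.orthonormal.1 j, one_pow]
  have := sum_mem_weightedPureDecompVals F hA.eigenvalues_nonneg hunit
  simp only [Complex.coe_smul, ← hA.isHermitian.eq_sum_eigenvalues_smul_vecMulVec] at this
  exact ⟨_, this⟩

lemma nonneg_of_mem_weightedPureDecompVals (hF : ∀ ψ, ∑ i, ‖ψ i‖ ^ 2 = 1 → 0 ≤ F ψ)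
    {A : Matrix ι ι ℂ} {x : ℝ} (hx : x ∈ weightedPureDecompVals F A) : 0 ≤ x := by
  obtain ⟨m, p, ψ, hp, hψ, -, rfl⟩ := hx
  exact sum_nonneg fun k _ => mul_nonneg (hp k) (hF _ (hψ k))

lemma exists_mul_le_mem_weightedPureDecompVals_smul_one [DecidableEq ι]
    (hF : ∀ ψ, ∑ i, ‖ψ i‖ ^ 2 = 1 → 0 ≤ F ψ) {ψ : ι → ℂ} (hψ : ∑ i, ‖ψ i‖ ^ 2 = 1) {c : ℝ}
    (hc : 0 ≤ c) : ∃ s ∈ weightedPureDecompVals F ((c : ℂ) • 1), c * F ψ ≤ s := by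
  have hP := posSemidef_one_sub_vecMulVec (ψ := ψ)
    (by rw [star_dotProduct_self_eq_sum_norm_sq, hψ, RCLike.ofReal_one])
  obtain ⟨s, hs⟩ := (hP.smul (Complex.zero_le_real.2 hc)).weightedPureDecompVals_nonempty F
  refine ⟨c * F ψ + s, ?_, le_add_of_nonneg_right (nonneg_of_mem_weightedPureDecompVals F hF hs)⟩
  simpa only [← smul_add, add_sub_cancel] using
    add_mem_weightedPureDecompVals F (mul_mem_weightedPureDecompVals F hψ hc) hs

lemma pureDecompVals_eq_weightedPureDecompVals {ρ : Matrix ι ι ℂ} (hρ : ρ.trace = 1) :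
    pureDecompVals F ρ = weightedPureDecompVals F ρ := by
  ext x
  constructor
  · rintro ⟨m, p, ψ, hp, -, hψ, hρψ, hx⟩
    exact ⟨m, p, ψ, hp, hψ, hρψ, hx⟩
  · rintro ⟨m, p, ψ, hp, hψ, hρψ, hx⟩
    refine ⟨m, p, ψ, hp, ?_, hψ, hρψ, hx⟩
    have htrace := congrArg trace hρψ
    simp only [hρ, trace_sum, trace_smul, trace_vecMulVec, dotProduct_comm (ψ _),
      star_dotProduct_self_eq_sum_norm_sq, hψ, RCLike.ofReal_one, smul_eq_mul, mul_one] at htrace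
    exact_mod_cast htrace.symm

end PureDecompositions

section ConcaveOnSimplex

variable {ι : Type*} [Fintype ι] {f : (ι → ℝ) → ℝ}

lemma apply_single_one_eq_of_comp_perm_eq [DecidableEq ι]
    (hf : ∀ σ : Equiv.Perm ι, ∀ x ∈ stdSimplex ℝ ι, f (x ∘ σ) = f x) (i j : ι) :
    f (Pi.single i 1) = f (Pi.single j 1) := by
  have := hf (Equiv.swap i j) _ (single_mem_stdSimplex ℝ i)
  rwa [Pi.single_comp_equiv, Equiv.symm_swap, Equiv.swap_apply_left, eq_comm] at this

lemma ConcaveOn.nonneg_of_mem_stdSimplex [DecidableEq ι] (hf : ConcaveOn ℝ (stdSimplex ℝ ι) f)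
    (h0 : ∀ i, f (Pi.single i 1) = 0) {x : ι → ℝ} (hx : x ∈ stdSimplex ℝ ι) : 0 ≤ f x := by
  have := hf.le_map_sum (t := univ) (w := x) (p := fun i => Pi.single i 1)
    (fun i _ => hx.1 i) hx.2 (fun i _ => single_mem_stdSimplex ℝ i)
  rwa [← pi_eq_sum_univ', sum_eq_zero fun i _ => by rw [h0, smul_zero]] at this

lemma ConcaveOn.le_apply_re_diag_of_mem_pureDecompVals (hf : ConcaveOn ℝ (stdSimplex ℝ ι) f)
    {ρ : Matrix ι ι ℂ} {x : ℝ} (hx : x ∈ pureDecompVals (fun ψ => f fun i => ‖ψ i‖ ^ 2) ρ) :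
    x ≤ f fun i => (ρ i i).re := by
  obtain ⟨m, p, ψ, hp, hp1, hψ, rfl, rfl⟩ := hx
  have hdiag : (fun i => ((∑ k, (p k : ℂ) • vecMulVec (ψ k) (star (ψ k))) i i).re) =
      ∑ k, p k • fun i => ‖ψ k i‖ ^ 2 := by
    ext i
    simp only [Matrix.sum_apply, Matrix.smul_apply, vecMulVec_apply, Pi.star_apply,
      RCLike.star_def, Complex.mul_conj', smul_eq_mul, ← Complex.ofReal_pow, ← Complex.ofReal_mul,
      ← Complex.ofReal_sum, Complex.ofReal_re, Finset.sum_apply, Pi.smul_apply]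
  rw [hdiag]
  simpa only [smul_eq_mul] using hf.le_map_sum (t := univ) (w := p) (p := fun k i => ‖ψ k i‖ ^ 2)
    (fun k _ => hp k) hp1 (fun k _ => ⟨fun _ => sq_nonneg _, hψ k⟩)

end ConcaveOnSimplex

lemma norm_sq_single_one {ι : Type*} [DecidableEq ι] (i : ι) :
    (fun j => ‖(Pi.single i 1 : ι → ℂ) j‖ ^ 2) = Pi.single i 1 := by
  ext j
  by_cases h : j = i <;> simp [h]

lemma exists_norm_sq_eq {ι : Type*} {y : ι → ℝ} (hy : ∀ i, 0 ≤ y i) :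
    ∃ ψ : ι → ℂ, (fun i => ‖ψ i‖ ^ 2) = y :=
  ⟨fun i => (√(y i) : ℂ), funext fun i => by simp [Real.sq_sqrt (hy i)]⟩

theorem coherence_of_assistance_gt_convex_roof_of_full_rank
    {n : ℕ} [NeZero n] (f : (Fin n → ℝ) → ℝ)
    (hconc : ConcaveOn ℝ (stdSimplex ℝ (Fin n)) f)
    (hsym : ∀ σ : Equiv.Perm (Fin n), ∀ x ∈ stdSimplex ℝ (Fin n), f (x ∘ σ) = f x)
    (hzero : f (Pi.single 0 1) = 0)
    (hne : ∃ x ∈ stdSimplex ℝ (Fin n), f x ≠ 0)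
    (ρ : Matrix (Fin n) (Fin n) ℂ)
    (hpsd : ρ.PosSemidef) (htr : ρ.trace = 1) (hrank : ρ.det ≠ 0) :
    sInf (pureDecompVals (fun ψ => f fun i => ‖ψ i‖ ^ 2) ρ) <
      sSup (pureDecompVals (fun ψ => f fun i => ‖ψ i‖ ^ 2) ρ) := by
  set F : (Fin n → ℂ) → ℝ := fun ψ => f fun i => ‖ψ i‖ ^ 2
  have hf_single (i : Fin n) : f (Pi.single i 1) = 0 :=
    (apply_single_one_eq_of_comp_perm_eq hsym i 0).trans hzero
  have hF_single (i : Fin n) : F (Pi.single i 1) = 0 := by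
    simp only [F, norm_sq_single_one, hf_single]
  have hF (ψ : Fin n → ℂ) (hψ : ∑ i, ‖ψ i‖ ^ 2 = 1) : 0 ≤ F ψ :=
    hconc.nonneg_of_mem_stdSimplex hf_single ⟨fun _ => sq_nonneg _, hψ⟩
  have hbdd_above : BddAbove (pureDecompVals F ρ) :=
    ⟨_, fun _ => hconc.le_apply_re_diag_of_mem_pureDecompVals⟩
  rw [pureDecompVals_eq_weightedPureDecompVals F htr] at hbdd_above ⊢
  have hbdd_below : BddBelow (weightedPureDecompVals F ρ) :=
    ⟨0, fun _ => nonneg_of_mem_weightedPureDecompVals F hF⟩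
  obtain ⟨y, hy, hfy⟩ := hne
  obtain ⟨ψ, rfl⟩ := exists_norm_sq_eq hy.1
  have hψ : ∑ i, ‖ψ i‖ ^ 2 = 1 := hy.2
  obtain ⟨c, hc, hρc⟩ := (hpsd.posDef_iff_det_ne_zero.2 hrank).exists_pos_posSemidef_sub_smul_one
  rw [← Complex.coe_smul] at hρc
  obtain ⟨r, hr⟩ := hρc.weightedPureDecompVals_nonempty F
  obtain ⟨s, hs, hs_ge⟩ := exists_mul_le_mem_weightedPureDecompVals_smul_one F hF hψ hc.le
  have hlow : r + 0 ∈ weightedPureDecompVals F ρ := sub_add_cancel ρ ((c : ℂ) • 1) ▸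
    add_mem_weightedPureDecompVals F hr (zero_mem_weightedPureDecompVals_smul_one F hF_single hc.le)
  have hhigh : r + s ∈ weightedPureDecompVals F ρ :=
    sub_add_cancel ρ ((c : ℂ) • 1) ▸ add_mem_weightedPureDecompVals F hr hs
  have hcFψ : 0 < c * F ψ := mul_pos hc ((hF ψ hψ).lt_of_ne' hfy)
  calc _ ≤ r + 0 := csInf_le hbdd_below hlow
    _ < r + s := by linarith
    _ ≤ _ := le_csSup hbdd_above hhigh
end

section
/- For every f ∈ 𝔉 on Ω_2 that is not identically zero, the coherence of assistance is not monotone under incoherent operations: C_a of the pure incoherent state |0⟩⟨0| equals 0, while C_a of the maximally mixed qubit state (1/2)·I (which is the image of |0⟩⟨0| under the incoherent operation Λ(ρ) = K_1 ρ K_1† + K_2 ρ K_2† with K_1 = I/√2 and K_2 = X/√2, X the swap of basis vectors) is strictly positive; hence C_a(|0⟩⟨0|) < C_a(Λ(|0⟩⟨0|)). -/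
/-!
Every pure-state decomposition of `|0⟩⟨0|` consists of multiples of `|0⟩`, on which `C_f` takes
the value `f(1,0) = 0`; hence `C_a(|0⟩⟨0|) = 0`. A concave function that is nonnegative at the
vertices of the simplex is nonnegative on it, and a concave permutation-invariant one is maximal
at the uniform point (Jensen applied to the average of the cyclic shifts of `x`). So if `f` is
nonzero somewhere, `f(1/2,1/2) > 0`, and the decomposition of `I/2` into `|+⟩` and `|−⟩`, whose
moduli are uniform, gives `C_a(I/2) ≥ f(1/2,1/2) > 0`.
-/

open Matrix
open scoped ComplexOrder

section Simplex

variable {ι : Type*} [Fintype ι] [DecidableEq ι] {f : (ι → ℝ) → ℝ}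

lemma ConcaveOn.nonneg_of_nonneg_single (hf : ConcaveOn ℝ (stdSimplex ℝ ι) f)
    (hvert : ∀ i, 0 ≤ f (Pi.single i 1)) {x : ι → ℝ} (hx : x ∈ stdSimplex ℝ ι) : 0 ≤ f x := by
  have hjensen := hf.le_map_sum (t := Finset.univ) (w := x) (p := fun i => Pi.single i 1)
    (fun i _ => hx.1 i) hx.2 (fun i _ => single_mem_stdSimplex ℝ i)
  have hx_eq : ∑ i, x i • (Pi.single i 1 : ι → ℝ) = x := by
    simp_rw [← Pi.single_smul', smul_eq_mul, mul_one, Finset.univ_sum_single]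
  rw [hx_eq] at hjensen
  exact (Finset.sum_nonneg fun i _ => smul_nonneg (hx.1 i) (hvert i)).trans hjensen

lemma apply_single_eq_of_perm_invariant
    (hsym : ∀ σ : Equiv.Perm ι, ∀ x ∈ stdSimplex ℝ ι, f (x ∘ σ) = f x) (i j : ι) :
    f (Pi.single i 1) = f (Pi.single j 1) := by
  rw [← hsym (Equiv.swap i j) _ (single_mem_stdSimplex ℝ j), Pi.single_comp_equiv,
    Equiv.symm_swap, Equiv.swap_apply_right]

end Simplex

section UniformPoint

variable {n : ℕ} [NeZero n] {f : (Fin n → ℝ) → ℝ}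

lemma ConcaveOn.le_apply_uniform (hf : ConcaveOn ℝ (stdSimplex ℝ (Fin n)) f)
    (hsym : ∀ σ : Equiv.Perm (Fin n), ∀ x ∈ stdSimplex ℝ (Fin n), f (x ∘ σ) = f x)
    {x : Fin n → ℝ} (hx : x ∈ stdSimplex ℝ (Fin n)) : f x ≤ f fun _ => (n : ℝ)⁻¹ := by
  have hn : (n : ℝ) ≠ 0 := Nat.cast_ne_zero.mpr (NeZero.ne n)
  have hshift_mem : ∀ k : Fin n, x ∘ Equiv.addLeft k ∈ stdSimplex ℝ (Fin n) := fun k =>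
    ⟨fun i => hx.1 _, by rw [← hx.2]; exact Fintype.sum_equiv (Equiv.addLeft k) _ _ fun _ => rfl⟩
  have hjensen := hf.le_map_sum (t := Finset.univ) (w := fun _ => (n : ℝ)⁻¹)
    (p := fun k => x ∘ Equiv.addLeft k) (fun _ _ => by positivity) (by simp [hn])
    (fun k _ => hshift_mem k)
  have hmean : ∑ k : Fin n, (n : ℝ)⁻¹ • (x ∘ Equiv.addLeft k) = fun _ => (n : ℝ)⁻¹ := by
    ext i
    rw [Finset.sum_apply]
    simp only [Pi.smul_apply, Function.comp_apply, Equiv.coe_addLeft, smul_eq_mul]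
    rw [← Finset.mul_sum, Fintype.sum_equiv (Equiv.addRight i) (fun k => x (k + i)) x
      fun _ => rfl, hx.2, mul_one]
  rw [hmean] at hjensen
  simp only [hsym _ x hx, Finset.sum_const, Finset.card_univ, Fintype.card_fin, nsmul_eq_mul,
    smul_eq_mul] at hjensen
  rwa [← mul_assoc, mul_inv_cancel₀ hn, one_mul] at hjensen

lemma ConcaveOn.apply_uniform_pos (hf : ConcaveOn ℝ (stdSimplex ℝ (Fin n)) f)
    (hsym : ∀ σ : Equiv.Perm (Fin n), ∀ x ∈ stdSimplex ℝ (Fin n), f (x ∘ σ) = f x)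
    (hvert : 0 ≤ f (Pi.single 0 1)) (hne : ∃ x ∈ stdSimplex ℝ (Fin n), f x ≠ 0) :
    0 < f fun _ => (n : ℝ)⁻¹ := by
  obtain ⟨x, hx, hfx⟩ := hne
  have hnonneg : 0 ≤ f x := hf.nonneg_of_nonneg_single
    (fun i => (apply_single_eq_of_perm_invariant hsym i 0).symm ▸ hvert) hx
  exact (hnonneg.lt_of_ne' hfx).trans_le (hf.le_apply_uniform hsym hx)

end UniformPoint

lemma diag_eq_of_eq_sum_vecMulVec {ι : Type*} {ρ : Matrix ι ι ℂ} {m : ℕ} {p : Fin m → ℝ}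
    {ψ : Fin m → ι → ℂ} (hρ : ρ = ∑ k, (p k : ℂ) • vecMulVec (ψ k) (star (ψ k))) (i : ι) :
    ρ i i = ((∑ k, p k * ‖ψ k i‖ ^ 2 : ℝ) : ℂ) := by
  rw [hρ, Matrix.sum_apply]
  push_cast
  refine Finset.sum_congr rfl fun k _ => ?_
  rw [Matrix.smul_apply, vecMulVec_apply, Pi.star_apply, RCLike.star_def, Complex.mul_conj,
    Complex.normSq_eq_norm_sq, smul_eq_mul]
  push_cast
  rfl

section PureDecomposition

variable {ι : Type*} [Fintype ι]

lemma pureDecompVals_subset_Iic {F : (ι → ℂ) → ℝ} {M : ℝ}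
    (hF : ∀ ψ : ι → ℂ, ∑ i, ‖ψ i‖ ^ 2 = 1 → F ψ ≤ M) (ρ : Matrix ι ι ℂ) :
    pureDecompVals F ρ ⊆ Set.Iic M := by
  rintro x ⟨m, p, ψ, hp, hp_sum, hψ, -, rfl⟩
  calc ∑ k, p k * F (ψ k) ≤ ∑ k, p k * M :=
        Finset.sum_le_sum fun k _ => mul_le_mul_of_nonneg_left (hF _ (hψ k)) (hp k)
    _ = M := by rw [← Finset.sum_mul, hp_sum, one_mul]

variable [DecidableEq ι]

lemma pureDecompVals_single {F : (ι → ℂ) → ℝ} (i : ι) {c : ℝ}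
    (hF : ∀ ψ : ι → ℂ, ∑ j, ‖ψ j‖ ^ 2 = 1 → (∀ j ≠ i, ψ j = 0) → F ψ = c) :
    pureDecompVals F (Matrix.single i i 1) = {c} := by
  have hunit : ∑ j, ‖(Pi.single i 1 : ι → ℂ) j‖ ^ 2 = 1 := by
    rw [Fintype.sum_eq_single i fun j hj => by simp [hj]]
    simp
  refine Set.eq_singleton_iff_unique_mem.mpr ⟨?_, ?_⟩
  · refine ⟨1, fun _ => 1, fun _ => Pi.single i 1, fun _ => zero_le_one, by simp, fun _ => hunit,
      by simp [single_eq_single_vecMulVec_single], ?_⟩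
    simp [hF _ hunit fun j hj => Pi.single_eq_of_ne hj 1]
  · rintro x ⟨m, p, ψ, hp, hp_sum, hψ, hρ, rfl⟩
    have hsupp : ∀ k, p k ≠ 0 → ∀ j ≠ i, ψ k j = 0 := by
      intro k hpk j hj
      have hdiag := diag_eq_of_eq_sum_vecMulVec hρ j
      rw [single_apply_of_row_ne (Ne.symm hj), eq_comm, Complex.ofReal_eq_zero,
        Finset.sum_eq_zero_iff_of_nonneg fun k _ => by have := hp k; positivity] at hdiag
      simpa [hpk] using hdiag k (Finset.mem_univ k)
    calc ∑ k, p k * F (ψ k) = ∑ k, p k * c := Finset.sum_congr rfl fun k _ => by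
          rcases eq_or_ne (p k) 0 with hpk | hpk
          · simp [hpk]
          · rw [hF _ (hψ k) (hsupp k hpk)]
      _ = c := by rw [← Finset.sum_mul, hp_sum, one_mul]

lemma pureDecompVals_norm_sq_single (f : (ι → ℝ) → ℝ) (i : ι) :
    pureDecompVals (fun ψ => f fun j => ‖ψ j‖ ^ 2) (Matrix.single i i 1) =
      {f (Pi.single i 1)} := by
  refine pureDecompVals_single i fun ψ hψ hsupp => congrArg f (funext fun j => ?_)
  rcases eq_or_ne j i with rfl | hj
  · rw [Pi.single_eq_same]
    rwa [Fintype.sum_eq_single j fun k hk => by simp [hsupp k hk]] at hψ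
  · simp [hsupp j hj, hj]

end PureDecomposition

lemma pureDecompVals_norm_sq_subset_Iic {n : ℕ} [NeZero n] {f : (Fin n → ℝ) → ℝ}
    (hf : ConcaveOn ℝ (stdSimplex ℝ (Fin n)) f)
    (hsym : ∀ σ : Equiv.Perm (Fin n), ∀ x ∈ stdSimplex ℝ (Fin n), f (x ∘ σ) = f x)
    (ρ : Matrix (Fin n) (Fin n) ℂ) :
    pureDecompVals (fun ψ => f fun i => ‖ψ i‖ ^ 2) ρ ⊆ Set.Iic (f fun _ => (n : ℝ)⁻¹) :=
  pureDecompVals_subset_Iic (fun _ hψ => hf.le_apply_uniform hsym ⟨fun _ => by positivity, hψ⟩) ρ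

lemma ofReal_inv_sqrt_two_mul_self : ((√2 : ℝ) : ℂ)⁻¹ * ((√2 : ℝ) : ℂ)⁻¹ = 2⁻¹ := by
  rw [← mul_inv, ← Complex.ofReal_mul, Real.mul_self_sqrt zero_le_two]
  norm_num

/-- The maximally mixed qubit state is the equal mixture of `|+⟩` and `|−⟩`. -/
lemma mem_pureDecompVals_half_smul_one (F : (Fin 2 → ℂ) → ℝ) :
    let s : ℂ := ((√2 : ℝ) : ℂ)⁻¹
    (F ![s, s] + F ![s, -s]) / 2 ∈ pureDecompVals F ((2 : ℂ)⁻¹ • 1) := by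
  intro s
  refine ⟨2, ![2⁻¹, 2⁻¹], ![![s, s], ![s, -s]], ?_, ?_, ?_, ?_, ?_⟩
  · intro k; fin_cases k <;> norm_num
  · norm_num
  · intro k; fin_cases k <;> simp [s] <;> norm_num
  · ext i j
    fin_cases i <;> fin_cases j <;>
      simp [s, vecMulVec_apply, Fin.sum_univ_two, -cons_vecMulVec, -vecMulVec_cons,
        Complex.conj_ofReal, ofReal_inv_sqrt_two_mul_self] <;> norm_num
  · simp [Fin.sum_univ_two]; ring

theorem coherence_of_assistance_not_monotone (f : (Fin 2 → ℝ) → ℝ)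
    (hconc : ConcaveOn ℝ (stdSimplex ℝ (Fin 2)) f)
    (hsym : ∀ σ : Equiv.Perm (Fin 2), ∀ x ∈ stdSimplex ℝ (Fin 2), f (x ∘ σ) = f x)
    (hzero : f (Pi.single 0 1) = 0)
    (hne : ∃ x ∈ stdSimplex ℝ (Fin 2), f x ≠ 0) :
    let Cf : (Fin 2 → ℂ) → ℝ := fun ψ => f fun i => ‖ψ i‖ ^ 2
    let ρ₀ : Matrix (Fin 2) (Fin 2) ℂ := !![1, 0; 0, 0]
    let K₁ : Matrix (Fin 2) (Fin 2) ℂ := ((Real.sqrt 2 : ℂ))⁻¹ • 1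
    let K₂ : Matrix (Fin 2) (Fin 2) ℂ := ((Real.sqrt 2 : ℂ))⁻¹ • !![0, 1; 1, 0]
    let Λρ₀ : Matrix (Fin 2) (Fin 2) ℂ := K₁ * ρ₀ * K₁ᴴ + K₂ * ρ₀ * K₂ᴴ
    Λρ₀ = (2 : ℂ)⁻¹ • 1 ∧
    sSup (pureDecompVals Cf ρ₀) = 0 ∧
    0 < sSup (pureDecompVals Cf Λρ₀) ∧
    sSup (pureDecompVals Cf ρ₀) < sSup (pureDecompVals Cf Λρ₀) := by
  intro Cf ρ₀ K₁ K₂ Λρ₀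
  have hΛ : Λρ₀ = (2 : ℂ)⁻¹ • 1 := by
    show K₁ * ρ₀ * K₁ᴴ + K₂ * ρ₀ * K₂ᴴ = (2 : ℂ)⁻¹ • 1
    ext i j
    fin_cases i <;> fin_cases j <;>
      simp [ρ₀, K₁, K₂, vecMul, dotProduct, Fin.sum_univ_two, Complex.conj_ofReal,
        ofReal_inv_sqrt_two_mul_self]
  have hρ₀ : sSup (pureDecompVals Cf ρ₀) = 0 := by
    have hρ₀_single : ρ₀ = Matrix.single 0 0 1 := by
      ext i j; fin_cases i <;> fin_cases j <;> rfl
    rw [hρ₀_single, pureDecompVals_norm_sq_single, csSup_singleton, hzero]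
  have hpos : 0 < sSup (pureDecompVals Cf Λρ₀) := by
    have hbdd := bddAbove_Iic.mono (pureDecompVals_norm_sq_subset_Iic hconc hsym Λρ₀)
    have huniform : ∀ ψ : Fin 2 → ℂ, (∀ i, ‖ψ i‖ ^ 2 = 2⁻¹) → Cf ψ = f fun _ => 2⁻¹ :=
      fun ψ hψ => congrArg f (funext hψ)
    refine (hconc.apply_uniform_pos hsym hzero.ge hne).trans_le (le_csSup hbdd ?_)
    rw [hΛ]
    convert mem_pureDecompVals_half_smul_one Cf using 1
    rw [huniform _ fun i => ?_, huniform _ fun i => ?_, add_self_div_two, Nat.cast_ofNat] <;>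
      fin_cases i <;> simp
  exact ⟨hΛ, hρ₀, hpos, hρ₀ ▸ hpos⟩
end

section
/- The coherence of assistance and the entanglement of assistance are in one-to-one correspondence through the generating function: for f, g ∈ 𝔉 on Ω_n, the coherence of assistance functionals C_a^f and C_a^g agree on all density matrices on ℂ^n if and only if the entanglement of assistance functionals E_a^f and E_a^g agree on all density matrices on ℂ^n ⊗ ℂ^n (and either condition holds if and only if f = g on Ω_n). -/
open Matrix
open scoped ComplexOrder

/-- The coherence `C_f(ψ) = f(|ψ₀|²,…,|ψ_{n-1}|²)` of a pure state. -/
noncomputable def Cf {n : ℕ} (f : (Fin n → ℝ) → ℝ) (ψ : Fin n → ℂ) : ℝ :=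
  f fun i => ‖ψ i‖ ^ 2

/-- The entanglement `E_f(Ψ) = f(λ₁,…,λₙ)` of a pure state `Ψ ∈ ℂ^n ⊗ ℂ^n`,
where `λ₁,…,λₙ` are the eigenvalues of `A Aᴴ` with `A` the coefficient matrix of `Ψ`. -/
noncomputable def Ef {n : ℕ} (f : (Fin n → ℝ) → ℝ) (Ψ : Fin n × Fin n → ℂ) : ℝ :=
  f (Matrix.isHermitian_mul_conjTranspose_self (coeffMatrix Ψ)).eigenvalues


/-! Averaging over the sign patterns `ψ_s = (±√x_i)_i` writes `diag x` as a mixture of pure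
states each of coherence `f x`, while concavity bounds every pure state decomposition by `f x`;
so `C_a^f (diag x) = f x`, and the coherence of assistance determines `f` on the simplex.
The isometry `V : |i⟩ ↦ |ii⟩` transports pure state decompositions of `ρ` to those of `V ρ V†`
and back (up to components of weight zero), and `E_f (V ψ) = C_f ψ` since the Schmidt spectrum
of `V ψ` is a permutation of `(|ψ_i|²)_i`. Hence `E_a^f (V ρ V†) = C_a^f ρ`, so agreement of the
entanglements of assistance forces agreement of the coherences of assistance. Conversely, if
`f = g` on the simplex, all four functionals agree, because the squared amplitudes and the
Schmidt spectrum of a unit vector lie in the simplex. -/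

open Finset

theorem sum_subtype_eq_sum_of_eq_zero {κ M : Type*} [Fintype κ] [AddCommMonoid M]
    (P : κ → Prop) [DecidablePred P] (g : κ → M) (hg : ∀ k, ¬P k → g k = 0) :
    ∑ k : Subtype P, g k = ∑ k, g k := by
  rw [← Finset.sum_subtype (univ.filter P) (by simp) g,
    Finset.sum_filter_of_ne fun k _ hk => not_not.1 (mt (hg k) hk)]

section PureDecomposition
variable {ι : Type*}

theorem diag_eq_sum_mul_norm_sq {ρ : Matrix ι ι ℂ} {κ : Type*} [Fintype κ] {p : κ → ℝ}
    {ψ : κ → ι → ℂ} (hρ : ρ = ∑ k, (p k : ℂ) • vecMulVec (ψ k) (star (ψ k))) (a : ι) :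
    ρ a a = ((∑ k, p k * ‖ψ k a‖ ^ 2 : ℝ) : ℂ) := by
  simp [hρ, Matrix.sum_apply, vecMulVec_apply, Complex.mul_conj, Complex.normSq_eq_norm_sq]

theorem eq_zero_of_diag_eq_zero {ρ : Matrix ι ι ℂ} {κ : Type*} [Fintype κ] {p : κ → ℝ}
    {ψ : κ → ι → ℂ} (hp : ∀ k, 0 ≤ p k)
    (hρ : ρ = ∑ k, (p k : ℂ) • vecMulVec (ψ k) (star (ψ k))) {a : ι} (ha : ρ a a = 0)
    {k : κ} (hk : p k ≠ 0) : ψ k a = 0 := by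
  rw [diag_eq_sum_mul_norm_sq hρ, Complex.ofReal_eq_zero,
    Finset.sum_eq_zero_iff_of_nonneg fun k _ => mul_nonneg (hp k) (sq_nonneg _)] at ha
  simpa [hk] using ha k (Finset.mem_univ k)

variable [Fintype ι]

theorem mem_pureDecompVals_of_ne_zero (F : (ι → ℂ) → ℝ) {ρ : Matrix ι ι ℂ}
    {κ : Type*} [Fintype κ] (p : κ → ℝ) (ψ : κ → ι → ℂ)
    (hp : ∀ k, 0 ≤ p k) (hp1 : ∑ k, p k = 1)
    (hψ : ∀ k, p k ≠ 0 → ∑ i, ‖ψ k i‖ ^ 2 = 1)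
    (hρ : ρ = ∑ k, (p k : ℂ) • vecMulVec (ψ k) (star (ψ k))) :
    ∑ k, p k * F (ψ k) ∈ pureDecompVals F ρ := by
  classical
  let e := (Fintype.equivFin {k // p k ≠ 0}).symm
  refine ⟨_, fun k => p (e k), fun k => ψ (e k), fun k => hp _, ?_, fun k => hψ _ (e k).2, ?_, ?_⟩
  · rw [e.sum_comp (fun k => p k), sum_subtype_eq_sum_of_eq_zero _ p fun _ => not_not.1, hp1]
  · rw [e.sum_comp (fun k => (p k : ℂ) • vecMulVec (ψ k) (star (ψ k))),
      sum_subtype_eq_sum_of_eq_zero (p · ≠ 0) (fun k => (p k : ℂ) • vecMulVec (ψ k) (star (ψ k)))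
        fun k hk => by simp [not_not.1 hk], hρ]
  · rw [e.sum_comp (fun k => p k * F (ψ k)),
      sum_subtype_eq_sum_of_eq_zero (p · ≠ 0) (fun k => p k * F (ψ k))
        fun k hk => by simp [not_not.1 hk]]

theorem pureDecompVals_congr {F G : (ι → ℂ) → ℝ}
    (h : ∀ ψ : ι → ℂ, ∑ i, ‖ψ i‖ ^ 2 = 1 → F ψ = G ψ) (ρ : Matrix ι ι ℂ) :
    pureDecompVals F ρ = pureDecompVals G ρ := by
  ext x
  constructor <;> rintro ⟨m, p, ψ, hp, hp1, hψ, hρ, rfl⟩ <;>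
    refine ⟨m, p, ψ, hp, hp1, hψ, hρ, Finset.sum_congr rfl fun k _ => ?_⟩ <;>
    simp only [h (ψ k) (hψ k)]

end PureDecomposition

section SignDecomposition
variable {ι : Type*}

noncomputable def signVec (x : ι → ℝ) (s : ι → ℤˣ) (i : ι) : ℂ :=
  ((s i : ℤ) : ℂ) * (√(x i) : ℝ)

theorem norm_sq_signVec {x : ι → ℝ} (hx : ∀ i, 0 ≤ x i) (s : ι → ℤˣ) (i : ι) :
    ‖signVec x s i‖ ^ 2 = x i := by
  have hs : ((s i : ℤ) : ℝ) ^ 2 = 1 := by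
    rw [← Int.cast_pow, ← Units.val_pow_eq_pow_val, Int.units_sq, Units.val_one, Int.cast_one]
  simp [signVec, mul_pow, hx i, hs]

variable [Fintype ι] [DecidableEq ι]

theorem sum_units_mul_units (i j : ι) :
    ∑ s : ι → ℤˣ, (((s i * s j : ℤˣ) : ℤ) : ℂ) = if i = j then Fintype.card (ι → ℤˣ) else 0 := by
  -- `s ↦ s i * s j` is a character of the finite group `ι → ℤˣ`, trivial exactly when `i = j`.
  let χ : (ι → ℤˣ) →* ℂ := (Int.castRingHom ℂ : ℤ →* ℂ).comp
    ((Units.coeHom ℤ).comp (Pi.evalMonoidHom (fun _ => ℤˣ) i * Pi.evalMonoidHom _ j))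
  have hχ : χ = 1 ↔ i = j := by
    constructor
    · intro h
      by_contra hij
      have := DFunLike.congr_fun h (Pi.mulSingle i (-1))
      norm_num [χ, Ne.symm hij] at this
    · rintro rfl
      ext s
      simp [χ, Int.units_mul_self]
  classical
  refine (sum_hom_units χ).trans ?_
  by_cases hij : i = j <;> simp [hχ, hij]

theorem diagonal_eq_sum_signVec {x : ι → ℝ} (hx : ∀ i, 0 ≤ x i) :
    diagonal (fun i => (x i : ℂ)) = ∑ s : ι → ℤˣ,
      (((Fintype.card (ι → ℤˣ) : ℝ)⁻¹ : ℝ) : ℂ) • vecMulVec (signVec x s) (star (signVec x s)) := by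
  ext i j
  have hterm : ∀ s : ι → ℤˣ, (vecMulVec (signVec x s) (star (signVec x s))) i j
      = (((s i * s j : ℤˣ) : ℤ) : ℂ) * ((√(x i) * √(x j) : ℝ) : ℂ) := by
    intro s
    simp [vecMulVec_apply, signVec]
    ring
  simp only [Matrix.sum_apply, Matrix.smul_apply, hterm, smul_eq_mul, ← mul_sum, ← sum_mul,
    sum_units_mul_units]
  rcases eq_or_ne i j with rfl | hij
  · simp [Real.mul_self_sqrt (hx i)]
  · simp [hij]

end SignDecomposition

section Coherence
variable {n : ℕ} {f : (Fin n → ℝ) → ℝ}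

theorem norm_sq_mem_stdSimplex {ψ : Fin n → ℂ} (hψ : ∑ i, ‖ψ i‖ ^ 2 = 1) :
    (fun i => ‖ψ i‖ ^ 2) ∈ stdSimplex ℝ (Fin n) :=
  ⟨fun _ => sq_nonneg _, hψ⟩

theorem pureDecompVals_Cf_congr {g : (Fin n → ℝ) → ℝ} (hfg : Set.EqOn f g (stdSimplex ℝ (Fin n)))
    (ρ : Matrix (Fin n) (Fin n) ℂ) : pureDecompVals (Cf f) ρ = pureDecompVals (Cf g) ρ :=
  pureDecompVals_congr (fun _ hψ => hfg (norm_sq_mem_stdSimplex hψ)) ρ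

theorem isGreatest_pureDecompVals_Cf_diagonal (hf : ConcaveOn ℝ (stdSimplex ℝ (Fin n)) f)
    {x : Fin n → ℝ} (hx : x ∈ stdSimplex ℝ (Fin n)) :
    IsGreatest (pureDecompVals (Cf f) (diagonal fun i => (x i : ℂ))) (f x) := by
  constructor
  · have hCf : ∀ s, Cf f (signVec x s) = f x := fun s => by
      simp only [Cf, norm_sq_signVec hx.1]
    have hval : f x = ∑ s : Fin n → ℤˣ, (Fintype.card (Fin n → ℤˣ) : ℝ)⁻¹ * Cf f (signVec x s) := by
      simp [hCf]
    rw [hval]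
    refine mem_pureDecompVals_of_ne_zero _ _ _ (fun _ => by positivity) (by simp)
      (fun s _ => by simpa only [norm_sq_signVec hx.1] using hx.2) (diagonal_eq_sum_signVec hx.1)
  · rintro y ⟨m, p, ψ, hp, hp1, hψ, hρ, rfl⟩
    have hmix : ∑ k, p k • (fun i => ‖ψ k i‖ ^ 2) = x := by
      ext i
      have := diag_eq_sum_mul_norm_sq hρ i
      rw [diagonal_apply_eq] at this
      simpa using (Complex.ofReal_injective this).symm
    simpa only [hmix, Cf, smul_eq_mul] using
      hf.le_map_sum (fun k _ => hp k) hp1 fun k _ => norm_sq_mem_stdSimplex (hψ k)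

end Coherence

section DiagEmbedding
variable {ι : Type*} [Fintype ι]

theorem mul_vecMulVec_star_mul_conjTranspose {κ : Type*} (M : Matrix κ ι ℂ) (ψ : ι → ℂ) :
    M * vecMulVec ψ (star ψ) * Mᴴ = vecMulVec (M *ᵥ ψ) (star (M *ᵥ ψ)) := by
  rw [mul_vecMulVec, vecMulVec_mul, star_mulVec]

theorem mul_sum_vecMulVec_mul_conjTranspose {κ μ : Type*} [Fintype μ] (M : Matrix κ ι ℂ)
    (p : μ → ℝ) (ψ : μ → ι → ℂ) :
    M * (∑ k, (p k : ℂ) • vecMulVec (ψ k) (star (ψ k))) * Mᴴ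
      = ∑ k, (p k : ℂ) • vecMulVec (M *ᵥ ψ k) (star (M *ᵥ ψ k)) := by
  simp only [Matrix.mul_sum, Matrix.sum_mul, Matrix.mul_smul, Matrix.smul_mul,
    mul_vecMulVec_star_mul_conjTranspose]

variable [DecidableEq ι]

variable (ι) in
def diagEmbedding : Matrix (ι × ι) ι ℂ := of fun a i => if a = (i, i) then 1 else 0

theorem diagEmbedding_mulVec (ψ : ι → ℂ) (a : ι × ι) :
    (diagEmbedding ι *ᵥ ψ) a = if a.1 = a.2 then ψ a.1 else 0 := by
  obtain ⟨i, j⟩ := a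
  rcases eq_or_ne i j with rfl | hij
  · simp [diagEmbedding, mulVec, dotProduct]
  · simp only [diagEmbedding, mulVec, dotProduct, of_apply, Prod.mk.injEq, ite_mul, one_mul,
      zero_mul, hij, if_false]
    exact sum_eq_zero fun k _ => if_neg fun h => hij (h.1.trans h.2.symm)

theorem conjTranspose_diagEmbedding_mulVec (Ψ : ι × ι → ℂ) (i : ι) :
    ((diagEmbedding ι)ᴴ *ᵥ Ψ) i = Ψ (i, i) := by
  simp [diagEmbedding, mulVec, dotProduct]

theorem conjTranspose_diagEmbedding_mul_self : (diagEmbedding ι)ᴴ * diagEmbedding ι = 1 := by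
  ext i j
  simp [diagEmbedding, mul_apply, one_apply, eq_comm]

theorem sum_norm_sq_diagEmbedding_mulVec (ψ : ι → ℂ) :
    ∑ a, ‖(diagEmbedding ι *ᵥ ψ) a‖ ^ 2 = ∑ i, ‖ψ i‖ ^ 2 := by
  simp [diagEmbedding_mulVec, Fintype.sum_prod_type, apply_ite]

theorem diagEmbedding_mul_mul_conjTranspose_apply_of_ne (ρ : Matrix ι ι ℂ) {i j : ι} (hij : i ≠ j) :
    (diagEmbedding ι * ρ * (diagEmbedding ι)ᴴ) (i, j) (i, j) = 0 := by
  have hrow : ∀ k, diagEmbedding ι (i, j) k = 0 := fun k =>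
    if_neg fun h => hij ((Prod.mk.inj h).1.trans (Prod.mk.inj h).2.symm)
  simp [mul_apply, hrow]

theorem conjTranspose_diagEmbedding_mul_mul_conjTranspose_mul (ρ : Matrix ι ι ℂ) :
    (diagEmbedding ι)ᴴ * (diagEmbedding ι * ρ * (diagEmbedding ι)ᴴ) * diagEmbedding ι = ρ := by
  simp only [← Matrix.mul_assoc, conjTranspose_diagEmbedding_mul_self, Matrix.one_mul]
  rw [Matrix.mul_assoc, conjTranspose_diagEmbedding_mul_self, Matrix.mul_one]

theorem trace_diagEmbedding_mul_mul_conjTranspose (ρ : Matrix ι ι ℂ) :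
    (diagEmbedding ι * ρ * (diagEmbedding ι)ᴴ).trace = ρ.trace := by
  rw [trace_mul_cycle, conjTranspose_diagEmbedding_mul_self, one_mul]

end DiagEmbedding

section Entanglement
variable {n : ℕ}

theorem exists_perm_comp_eq_of_map_univ_eq {α : Type*} [LinearOrder α] {u v : Fin n → α}
    (h : Multiset.map u univ.val = Multiset.map v univ.val) :
    ∃ σ : Equiv.Perm (Fin n), v = u ∘ σ := by
  have hperm : (List.ofFn u).Perm (List.ofFn v) := by
    rwa [Fin.univ_val_map, Fin.univ_val_map, Multiset.coe_eq_coe] at h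
  have hsorted : u ∘ Tuple.sort u = v ∘ Tuple.sort v :=
    List.ofFn_injective <| List.Perm.eq_of_sortedLE
      (Tuple.monotone_sort u).sortedLE_ofFn (Tuple.monotone_sort v).sortedLE_ofFn
      (((Tuple.sort u).ofFn_comp_perm u).trans
        (hperm.trans ((Tuple.sort v).ofFn_comp_perm v).symm))
  refine ⟨(Tuple.sort v).symm.trans (Tuple.sort u), funext fun i => ?_⟩
  simpa using (congrFun hsorted ((Tuple.sort v).symm i)).symm

theorem Matrix.IsHermitian.exists_eigenvalues_eq_comp_perm {A : Matrix (Fin n) (Fin n) ℂ}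
    (hA : A.IsHermitian) {d : Fin n → ℝ} (h : A = diagonal fun i => (d i : ℂ)) :
    ∃ σ : Equiv.Perm (Fin n), hA.eigenvalues = d ∘ σ := by
  subst h
  have hroots := hA.roots_charpoly_eq_eigenvalues
  rw [charpoly_diagonal, Polynomial.roots_prod _ _
    (prod_ne_zero_iff.2 fun i _ => Polynomial.X_sub_C_ne_zero _)] at hroots
  have hmap : Multiset.map ((↑) : ℝ → ℂ) (Multiset.map d univ.val)
      = Multiset.map ((↑) : ℝ → ℂ) (Multiset.map hA.eigenvalues univ.val) := by
    simpa [Multiset.map_map, Function.comp_def] using hroots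
  exact exists_perm_comp_eq_of_map_univ_eq (Multiset.map_injective Complex.ofReal_injective hmap)

theorem coeffMatrix_diagEmbedding_mulVec (ψ : Fin n → ℂ) :
    coeffMatrix (diagEmbedding (Fin n) *ᵥ ψ) = diagonal ψ := by
  ext i j
  rcases eq_or_ne i j with rfl | hij <;> simp [coeffMatrix, diagEmbedding_mulVec, *]

theorem Ef_diagEmbedding_mulVec {f : (Fin n → ℝ) → ℝ}
    (hf : ∀ σ : Equiv.Perm (Fin n), ∀ x ∈ stdSimplex ℝ (Fin n), f (x ∘ σ) = f x)
    {ψ : Fin n → ℂ} (hψ : ∑ i, ‖ψ i‖ ^ 2 = 1) :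
    Ef f (diagEmbedding (Fin n) *ᵥ ψ) = Cf f ψ := by
  have hAAH : coeffMatrix (diagEmbedding (Fin n) *ᵥ ψ) * (coeffMatrix (diagEmbedding (Fin n) *ᵥ ψ))ᴴ
      = diagonal fun i => ((‖ψ i‖ ^ 2 : ℝ) : ℂ) := by
    rw [coeffMatrix_diagEmbedding_mulVec, diagonal_conjTranspose, diagonal_mul_diagonal]
    simp [Complex.mul_conj, Complex.normSq_eq_norm_sq]
  obtain ⟨σ, hσ⟩ := (isHermitian_mul_conjTranspose_self _).exists_eigenvalues_eq_comp_perm hAAH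
  rw [Ef, hσ, Cf]
  exact hf σ _ (norm_sq_mem_stdSimplex hψ)

theorem eigenvalues_mem_stdSimplex {Ψ : Fin n × Fin n → ℂ} (hΨ : ∑ a, ‖Ψ a‖ ^ 2 = 1) :
    (isHermitian_mul_conjTranspose_self (coeffMatrix Ψ)).eigenvalues ∈ stdSimplex ℝ (Fin n) := by
  refine ⟨eigenvalues_self_mul_conjTranspose_nonneg _, ?_⟩
  have htrace := (isHermitian_mul_conjTranspose_self (coeffMatrix Ψ)).trace_eq_sum_eigenvalues
  have : (coeffMatrix Ψ * (coeffMatrix Ψ)ᴴ).trace = ((∑ a, ‖Ψ a‖ ^ 2 : ℝ) : ℂ) := by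
    simp [trace, mul_apply, coeffMatrix, Fintype.sum_prod_type, Complex.mul_conj,
      Complex.normSq_eq_norm_sq]
  rw [this, hΨ] at htrace
  apply Complex.ofReal_injective
  simpa using htrace.symm

theorem pureDecompVals_Ef_congr {f g : (Fin n → ℝ) → ℝ}
    (hfg : Set.EqOn f g (stdSimplex ℝ (Fin n))) (ρ : Matrix (Fin n × Fin n) (Fin n × Fin n) ℂ) :
    pureDecompVals (Ef f) ρ = pureDecompVals (Ef g) ρ :=
  pureDecompVals_congr (fun _ hΨ => hfg (eigenvalues_mem_stdSimplex hΨ)) ρ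

theorem pureDecompVals_Ef_diagEmbedding {f : (Fin n → ℝ) → ℝ}
    (hf : ∀ σ : Equiv.Perm (Fin n), ∀ x ∈ stdSimplex ℝ (Fin n), f (x ∘ σ) = f x)
    (ρ : Matrix (Fin n) (Fin n) ℂ) :
    pureDecompVals (Ef f) (diagEmbedding (Fin n) * ρ * (diagEmbedding (Fin n))ᴴ)
      = pureDecompVals (Cf f) ρ := by
  set V := diagEmbedding (Fin n)
  ext y
  constructor
  · rintro ⟨m, p, Ψ, hp, hp1, hΨ, hρ, rfl⟩
    have hdiag : ∀ k, p k ≠ 0 → Ψ k = V *ᵥ (Vᴴ *ᵥ Ψ k) := by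
      intro k hk
      ext ⟨i, j⟩
      rw [diagEmbedding_mulVec, conjTranspose_diagEmbedding_mulVec]
      rcases eq_or_ne i j with rfl | hij
      · simp
      · rw [if_neg hij]
        exact eq_zero_of_diag_eq_zero hp hρ
          (diagEmbedding_mul_mul_conjTranspose_apply_of_ne ρ hij) hk
    have hunit : ∀ k, p k ≠ 0 → ∑ i, ‖(Vᴴ *ᵥ Ψ k) i‖ ^ 2 = 1 := fun k hk => by
      rw [← sum_norm_sq_diagEmbedding_mulVec, ← hdiag k hk, hΨ k]
    have hval : ∀ k, p k * Ef f (Ψ k) = p k * Cf f (Vᴴ *ᵥ Ψ k) := fun k => by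
      rcases eq_or_ne (p k) 0 with hk | hk
      · simp [hk]
      · rw [hdiag k hk, Ef_diagEmbedding_mulVec hf (hunit k hk), ← hdiag k hk]
    have hρ' : ρ = ∑ k, (p k : ℂ) • vecMulVec (Vᴴ *ᵥ Ψ k) (star (Vᴴ *ᵥ Ψ k)) := by
      rw [← mul_sum_vecMulVec_mul_conjTranspose, conjTranspose_conjTranspose, ← hρ,
        conjTranspose_diagEmbedding_mul_mul_conjTranspose_mul]
    simp only [hval]
    exact mem_pureDecompVals_of_ne_zero _ p _ hp hp1 hunit hρ'
  · rintro ⟨m, p, ψ, hp, hp1, hψ, rfl, rfl⟩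
    refine ⟨m, p, fun k => V *ᵥ ψ k, hp, hp1, fun k => ?_,
      mul_sum_vecMulVec_mul_conjTranspose _ _ _, sum_congr rfl fun k _ => ?_⟩
    · rw [sum_norm_sq_diagEmbedding_mulVec, hψ k]
    · rw [Ef_diagEmbedding_mulVec hf (hψ k)]

end Entanglement

theorem assistance_one_to_one_correspondence_general
    {n : ℕ} (f g : (Fin n → ℝ) → ℝ)
    (hconcf : ConcaveOn ℝ (stdSimplex ℝ (Fin n)) f)
    (hsymf : ∀ σ : Equiv.Perm (Fin n), ∀ x ∈ stdSimplex ℝ (Fin n), f (x ∘ σ) = f x)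
    (hconcg : ConcaveOn ℝ (stdSimplex ℝ (Fin n)) g)
    (hsymg : ∀ σ : Equiv.Perm (Fin n), ∀ x ∈ stdSimplex ℝ (Fin n), g (x ∘ σ) = g x) :
    ((∀ ρ : Matrix (Fin n) (Fin n) ℂ, ρ.PosSemidef → ρ.trace = 1 →
        sSup (pureDecompVals (Cf f) ρ) = sSup (pureDecompVals (Cf g) ρ)) ↔
      (∀ ρ : Matrix (Fin n × Fin n) (Fin n × Fin n) ℂ, ρ.PosSemidef → ρ.trace = 1 →
        sSup (pureDecompVals (Ef f) ρ) = sSup (pureDecompVals (Ef g) ρ))) ∧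
    ((∀ ρ : Matrix (Fin n) (Fin n) ℂ, ρ.PosSemidef → ρ.trace = 1 →
        sSup (pureDecompVals (Cf f) ρ) = sSup (pureDecompVals (Cf g) ρ)) ↔
      (∀ x ∈ stdSimplex ℝ (Fin n), f x = g x)) := by
  have hC_iff : (∀ ρ : Matrix (Fin n) (Fin n) ℂ, ρ.PosSemidef → ρ.trace = 1 →
      sSup (pureDecompVals (Cf f) ρ) = sSup (pureDecompVals (Cf g) ρ)) ↔
      ∀ x ∈ stdSimplex ℝ (Fin n), f x = g x := by
    refine ⟨fun hC x hx => ?_, fun hfg ρ _ _ => ?_⟩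
    · have hpsd : (diagonal fun i => (x i : ℂ)).PosSemidef :=
        posSemidef_diagonal_iff.2 fun i => by exact_mod_cast hx.1 i
      have htr : (diagonal fun i => (x i : ℂ)).trace = 1 := by
        rw [trace_diagonal]; exact_mod_cast hx.2
      simpa only [(isGreatest_pureDecompVals_Cf_diagonal hconcf hx).csSup_eq,
        (isGreatest_pureDecompVals_Cf_diagonal hconcg hx).csSup_eq] using hC _ hpsd htr
    · rw [pureDecompVals_Cf_congr hfg]
  have hE_of_eq : (∀ x ∈ stdSimplex ℝ (Fin n), f x = g x) →
      ∀ ρ : Matrix (Fin n × Fin n) (Fin n × Fin n) ℂ, ρ.PosSemidef → ρ.trace = 1 →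
        sSup (pureDecompVals (Ef f) ρ) = sSup (pureDecompVals (Ef g) ρ) := fun hfg ρ _ _ => by
    rw [pureDecompVals_Ef_congr hfg]
  refine ⟨⟨fun hC => hE_of_eq (hC_iff.1 hC), fun hE ρ hρ htr => ?_⟩, hC_iff⟩
  simpa only [pureDecompVals_Ef_diagEmbedding hsymf, pureDecompVals_Ef_diagEmbedding hsymg] using
    hE _ (hρ.mul_mul_conjTranspose_same _) ((trace_diagEmbedding_mul_mul_conjTranspose ρ).trans htr)

theorem assistance_one_to_one_correspondence
    {n : ℕ} [NeZero n] (f g : (Fin n → ℝ) → ℝ)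
    (hconcf : ConcaveOn ℝ (stdSimplex ℝ (Fin n)) f)
    (hsymf : ∀ σ : Equiv.Perm (Fin n), ∀ x ∈ stdSimplex ℝ (Fin n), f (x ∘ σ) = f x)
    (hzerof : f (Pi.single 0 1) = 0)
    (hconcg : ConcaveOn ℝ (stdSimplex ℝ (Fin n)) g)
    (hsymg : ∀ σ : Equiv.Perm (Fin n), ∀ x ∈ stdSimplex ℝ (Fin n), g (x ∘ σ) = g x)
    (hzerog : g (Pi.single 0 1) = 0) :
    ((∀ ρ : Matrix (Fin n) (Fin n) ℂ, ρ.PosSemidef → ρ.trace = 1 →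
        sSup (pureDecompVals (Cf f) ρ) = sSup (pureDecompVals (Cf g) ρ)) ↔
      (∀ ρ : Matrix (Fin n × Fin n) (Fin n × Fin n) ℂ, ρ.PosSemidef → ρ.trace = 1 →
        sSup (pureDecompVals (Ef f) ρ) = sSup (pureDecompVals (Ef g) ρ))) ∧
    ((∀ ρ : Matrix (Fin n) (Fin n) ℂ, ρ.PosSemidef → ρ.trace = 1 →
        sSup (pureDecompVals (Cf f) ρ) = sSup (pureDecompVals (Cf g) ρ)) ↔
      (∀ x ∈ stdSimplex ℝ (Fin n), f x = g x)) :=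
  assistance_one_to_one_correspondence_general f g hconcf hsymf hconcg hsymg
end

section
/- For the concurrence-type function f(p) = √(2(1 − Σ_i p_i²)) on Ω_n, the coherence of assistance of any density matrix ρ on ℂ^n is bounded above by the diagonal of ρ: C_a(ρ) ≤ √(2(1 − Σ_i ρ_ii²)), where ρ_ii are the diagonal entries of ρ in the reference basis; equivalently, for every pure state decomposition ρ = Σ_k p_k ψ_k ψ_k† one has Σ_k p_k √(2(1 − Σ_i |(ψ_k)_i|⁴)) ≤ √(2(1 − Σ_i ρ_ii²)). -/
open Matrix
open scoped ComplexOrder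

/-!
The diagonal of `ρ = Σ_k p_k ψ_k ψ_k†` is the convex combination `Σ_k p_k |ψ_k|²` of the
probability vectors `|ψ_k|² ∈ Ω_n`, so for any `f` concave on `Ω_n` Jensen's inequality gives
`Σ_k p_k f(|ψ_k|²) ≤ f(diag ρ)`. The function `q ↦ √(2(1 - Σ_i q_i²))` is concave on `Ω_n`,
being the concave increasing `√` composed with the concave `2(1 - Σ_i q_i²)`, which is
nonnegative on `Ω_n`.
-/

lemma diag_sum_smul_vecMulVec_star_re {ι κ : Type*} [Fintype κ] (p : κ → ℝ) (ψ : κ → ι → ℂ)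
    (i : ι) :
    ((∑ k, (p k : ℂ) • vecMulVec (ψ k) (star (ψ k))) i i).re = ∑ k, p k * ‖ψ k i‖ ^ 2 := by
  simp only [Matrix.sum_apply, Matrix.smul_apply, vecMulVec_apply, Pi.star_apply, RCLike.star_def,
    Complex.mul_conj, Complex.normSq_eq_norm_sq, smul_eq_mul, Complex.re_sum,
    ← Complex.ofReal_mul, Complex.ofReal_re]

variable {ι κ : Type*} [Fintype ι] [Fintype κ]

lemma sum_sq_le_one_of_mem_stdSimplex {q : ι → ℝ} (hq : q ∈ stdSimplex ℝ ι) :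
    ∑ i, q i ^ 2 ≤ 1 :=
  calc ∑ i, q i ^ 2 ≤ ∑ i, q i := by
        refine Finset.sum_le_sum fun i _ => ?_
        have hqi : q i ≤ 1 := hq.2 ▸ Finset.single_le_sum (fun j _ => hq.1 j) (Finset.mem_univ i)
        nlinarith [hq.1 i]
    _ = 1 := hq.2

lemma concaveOn_stdSimplex_sqrt_two_mul_one_sub_sum_sq :
    ConcaveOn ℝ (stdSimplex ℝ ι) fun q => √(2 * (1 - ∑ i, q i ^ 2)) := by
  refine ⟨convex_stdSimplex ℝ ι, fun x hx y hy a b ha hb hab => ?_⟩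
  have hx' : 0 ≤ 2 * (1 - ∑ i, x i ^ 2) := by linarith [sum_sq_le_one_of_mem_stdSimplex hx]
  have hy' : 0 ≤ 2 * (1 - ∑ i, y i ^ 2) := by linarith [sum_sq_le_one_of_mem_stdSimplex hy]
  calc a • √(2 * (1 - ∑ i, x i ^ 2)) + b • √(2 * (1 - ∑ i, y i ^ 2))
      ≤ √(a • (2 * (1 - ∑ i, x i ^ 2)) + b • (2 * (1 - ∑ i, y i ^ 2))) :=
        Real.strictConcaveOn_sqrt.concaveOn.2 hx' hy' ha hb hab
    _ ≤ √(2 * (1 - ∑ i, (a • x + b • y) i ^ 2)) := by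
        refine Real.sqrt_le_sqrt ?_
        have hsq : ∑ i, (a * x i + b * y i) ^ 2 ≤ a * ∑ i, x i ^ 2 + b * ∑ i, y i ^ 2 := by
          rw [Finset.mul_sum, Finset.mul_sum, ← Finset.sum_add_distrib]
          exact Finset.sum_le_sum fun i _ =>
            (Even.convexOn_pow even_two).2 trivial trivial ha hb hab
        simp only [Pi.add_apply, Pi.smul_apply, smul_eq_mul]
        nlinarith

theorem sum_mul_le_of_concaveOn_stdSimplex {f : (ι → ℝ) → ℝ}
    (hf : ConcaveOn ℝ (stdSimplex ℝ ι) f) {p : κ → ℝ} {ψ : κ → ι → ℂ} (hp : ∀ k, 0 ≤ p k)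
    (hs : ∑ k, p k = 1) (hψ : ∀ k, ∑ i, ‖ψ k i‖ ^ 2 = 1) :
    ∑ k, p k * f (fun i => ‖ψ k i‖ ^ 2) ≤
      f (fun i => ((∑ k, (p k : ℂ) • vecMulVec (ψ k) (star (ψ k))) i i).re) := by
  have hdiag : (fun i => ((∑ k, (p k : ℂ) • vecMulVec (ψ k) (star (ψ k))) i i).re) =
      ∑ k, p k • fun i => ‖ψ k i‖ ^ 2 := by
    ext i
    simp only [diag_sum_smul_vecMulVec_star_re, Finset.sum_apply, Pi.smul_apply, smul_eq_mul]
  rw [hdiag]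
  exact hf.le_map_sum (fun k _ => hp k) hs fun k _ => ⟨fun i => sq_nonneg _, hψ k⟩

theorem sum_mul_sqrt_two_mul_one_sub_sum_norm_pow_four_le {p : κ → ℝ} {ψ : κ → ι → ℂ}
    (hp : ∀ k, 0 ≤ p k) (hs : ∑ k, p k = 1) (hψ : ∀ k, ∑ i, ‖ψ k i‖ ^ 2 = 1) :
    ∑ k, p k * √(2 * (1 - ∑ i, ‖ψ k i‖ ^ 4)) ≤
      √(2 * (1 - ∑ i, ((∑ k, (p k : ℂ) • vecMulVec (ψ k) (star (ψ k))) i i).re ^ 2)) := by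
  simpa only [← pow_mul] using
    sum_mul_le_of_concaveOn_stdSimplex concaveOn_stdSimplex_sqrt_two_mul_one_sub_sum_sq hp hs hψ

theorem concurrence_coherence_of_assistance_upper_bound_general
    {n : ℕ} (ρ : Matrix (Fin n) (Fin n) ℂ) :
    sSup (pureDecompVals
        (fun ψ => Real.sqrt (2 * (1 - ∑ i, ‖ψ i‖ ^ 4))) ρ) ≤
      Real.sqrt (2 * (1 - ∑ i, (ρ i i).re ^ 2)) ∧
    ∀ (m : ℕ) (p : Fin m → ℝ) (ψ : Fin m → Fin n → ℂ),
      (∀ k, 0 ≤ p k) → (∑ k, p k = 1) →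
      (∀ k, ∑ i, ‖ψ k i‖ ^ 2 = 1) →
      ρ = ∑ k, (p k : ℂ) • Matrix.vecMulVec (ψ k) (star (ψ k)) →
      ∑ k, p k * Real.sqrt (2 * (1 - ∑ i, ‖ψ k i‖ ^ 4)) ≤
        Real.sqrt (2 * (1 - ∑ i, (ρ i i).re ^ 2)) := by
  refine ⟨Real.sSup_le ?_ (Real.sqrt_nonneg _), ?_⟩
  · rintro x ⟨m, p, ψ, hp, hs, hψ, rfl, rfl⟩
    exact sum_mul_sqrt_two_mul_one_sub_sum_norm_pow_four_le hp hs hψ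
  · rintro m p ψ hp hs hψ rfl
    exact sum_mul_sqrt_two_mul_one_sub_sum_norm_pow_four_le hp hs hψ

theorem concurrence_coherence_of_assistance_upper_bound
    {n : ℕ} (ρ : Matrix (Fin n) (Fin n) ℂ) (hpsd : ρ.PosSemidef) (htr : ρ.trace = 1) :
    sSup (pureDecompVals
        (fun ψ => Real.sqrt (2 * (1 - ∑ i, ‖ψ i‖ ^ 4))) ρ) ≤
      Real.sqrt (2 * (1 - ∑ i, (ρ i i).re ^ 2)) ∧
    ∀ (m : ℕ) (p : Fin m → ℝ) (ψ : Fin m → Fin n → ℂ),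
      (∀ k, 0 ≤ p k) → (∑ k, p k = 1) →
      (∀ k, ∑ i, ‖ψ k i‖ ^ 2 = 1) →
      ρ = ∑ k, (p k : ℂ) • Matrix.vecMulVec (ψ k) (star (ψ k)) →
      ∑ k, p k * Real.sqrt (2 * (1 - ∑ i, ‖ψ k i‖ ^ 4)) ≤
        Real.sqrt (2 * (1 - ∑ i, (ρ i i).re ^ 2)) :=
  concurrence_coherence_of_assistance_upper_bound_general ρ
end
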